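/- Let α ∈ (0,1/2) be irrational and suppose w² ∈ L(α) with w nonempty and primitive. Then |w| = q₀, |w| = q₁, or |w| = q_{k,ℓ} for some k ≥ 2 with 0 < ℓ ≤ a_k, where q_{k,ℓ} are the denominators of convergents and semiconvergents of α. -/

import Mathlib

open Classical in
/-- The Sturmian word of slope `α` and intercept `x`: the `n`-th letter codes
whether the point `{x + nα}` lies in `I₁ = [1−α, 1)` (letter `true` = 1) or in
`I₀ = [0, 1−α)` (letter `false` = 0). -/
noncomputable def sturmian (α x : ℝ) (n : ℕ) : Bool :=
  if 1 - α ≤ Int.fract (x + n * α) then true else false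

open Classical in
/-- The Sturmian word of slope `α` and intercept `x` with the other convention:
`I₀ = (0, 1−α]` coded by `false` and `I₁ = (1−α, 1]` (i.e. `(1−α,1) ∪ {0}`) by `true`. -/
noncomputable def sturmian' (α x : ℝ) (n : ℕ) : Bool :=
  if Int.fract (x + n * α) = 0 ∨ 1 - α < Int.fract (x + n * α) then true else false

/-- `w` is a prefix of the infinite word `s`. -/
def IsPref (w : List Bool) (s : ℕ → Bool) : Prop :=
  ∀ i, i < w.length → w.getD i false = s i

/-- `w` belongs to the language `L(α)` of factors of Sturmian words of slope `α`. -/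
def inLang (α : ℝ) (w : List Bool) : Prop :=
  ∃ x ∈ Set.Ico (0 : ℝ) 1, ∃ k : ℕ, ∀ i < w.length, w.getD i false = sturmian α x (k + i)

/-- The map `ψ(x) = (x + 1 − α)/2` on the circle `[0,1)`, with `ψ(0) = (1−α)/2`. -/
noncomputable def psi (α x : ℝ) : ℝ := if x = 0 then (1 - α) / 2 else (x + 1 - α) / 2


/-- The Gauss-map iterates of `α`: `cfX α 0 = α`, `cfX α (n+1) = 1/{cfX α n}`. -/
noncomputable def cfX (α : ℝ) : ℕ → ℝ
  | 0 => α
  | n + 1 => (Int.fract (cfX α n))⁻¹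

/-- The partial quotients of the continued fraction expansion of `α`. -/
noncomputable def cfA (α : ℝ) (n : ℕ) : ℤ := ⌊cfX α n⌋

/-- The denominators of the convergents of `α`: `q₀ = 1`, `q₁ = a₁`,
`q_k = a_k q_{k-1} + q_{k-2}`. -/
noncomputable def cfQ (α : ℝ) : ℕ → ℤ
  | 0 => 1
  | 1 => cfA α 1
  | n + 2 => cfA α (n + 2) * cfQ α (n + 1) + cfQ α n

/-- `‖x‖ = min({x}, 1 - {x})`, the distance from `x` to the nearest integer. -/
noncomputable def dni (x : ℝ) : ℝ := min (Int.fract x) (1 - Int.fract x)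


/-- A word is primitive if it is a power `zⁿ` only for `n = 1`. -/
def Primitive (w : List Bool) : Prop :=
  ∀ (z : List Bool) (n : ℕ), w = List.flatten (List.replicate n z) → n = 1

/-!
Let `s` be the Sturmian word coding the orbit `θ + jα`. As `w²` is a factor, `s` has period
`n = |w|` on its first `2n` letters, while primitivity of `w` forbids every shift `0 < m < n` on
the first `n` letters (such a shift would make a rotation of `w` equal to `w`, hence `w` a proper
power). A shift by `z` with `{z} ∉ [α, 1 - α]` changes the letter at `y` exactly when `{y}` or
`{y - α}` lies in a window of length `‖z‖` adjacent to `1 - α`; a shift with `{z} ∈ [α, 1 - α]`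
turns every letter `1` into `0`. Comparing windows, `nα` is strictly closer to `ℤ` than any `mα`,
`0 < m < n`, on the same side, and `‖nα‖ < α`. Writing `(n, P)` in the basis
`(q_{K+1}, p_{K+1}), (q_K, p_K)`, where `‖q_{K+1}α‖ ≤ ‖nα‖ < ‖q_K α‖`, this best-approximation
property leaves only `n = q_{K+1}` and `n = ℓ q_{K+1} + q_K` with `0 < ℓ ≤ a_{K+2}`.
-/

-- numerators of the convergents of `α ∈ (0, 1)`, where `a₀ = 0`
noncomputable def cfP (α : ℝ) : ℕ → ℤ
  | 0 => 0
  | 1 => 1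
  | n + 2 => cfA α (n + 2) * cfP α (n + 1) + cfP α n

-- `|q_k α - p_k|`: the sign of `q_k α - p_k` is `(-1) ^ k`
noncomputable def cfDist (α : ℝ) (k : ℕ) : ℝ := (-1) ^ k * (cfQ α k * α - cfP α k)

def IsSemiconvergentDenom (α : ℝ) (n : ℤ) : Prop :=
  n = cfQ α 0 ∨ n = cfQ α 1 ∨
    ∃ (k : ℕ) (ℓ : ℤ), 2 ≤ k ∧ 0 < ℓ ∧ ℓ ≤ cfA α k ∧ n = ℓ * cfQ α (k - 1) + cfQ α (k - 2)

section ContinuedFraction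

variable {α : ℝ}

lemma irrational_cfX (hα : Irrational α) : ∀ k, Irrational (cfX α k)
  | 0 => hα
  | k + 1 => ((irrational_cfX hα k).sub_intCast ⌊cfX α k⌋).inv

lemma fract_cfX_pos (hα : Irrational α) (k : ℕ) : 0 < Int.fract (cfX α k) :=
  Int.fract_pos.2 ((irrational_cfX hα k).ne_int _)

lemma cfA_succ_pos (hα : Irrational α) (k : ℕ) : 0 < cfA α (k + 1) :=
  Int.floor_pos.2 (one_lt_inv_iff₀.2 ⟨fract_cfX_pos hα k, Int.fract_lt_one _⟩).le

lemma cfQ_pos (hα : Irrational α) : ∀ k, 0 < cfQ α k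
  | 0 => one_pos
  | 1 => cfA_succ_pos hα 0
  | k + 2 => by
    have := cfA_succ_pos hα (k + 1)
    have := cfQ_pos hα (k + 1)
    have := cfQ_pos hα k
    simp only [cfQ]
    positivity

lemma isSemiconvergentDenom_cfQ (hα : Irrational α) : ∀ k, IsSemiconvergentDenom α (cfQ α k)
  | 0 => Or.inl rfl
  | 1 => Or.inr (Or.inl rfl)
  | k + 2 => Or.inr (Or.inr ⟨k + 2, cfA α (k + 2), by omega, cfA_succ_pos hα (k + 1), le_rfl, rfl⟩)

lemma cfP_mul_cfQ_sub (α : ℝ) : ∀ k,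
    cfP α (k + 1) * cfQ α k - cfP α k * cfQ α (k + 1) = (-1) ^ k
  | 0 => by simp [cfP, cfQ]
  | k + 1 => by
    rw [pow_succ, ← cfP_mul_cfQ_sub α k]
    simp only [cfP, cfQ]
    ring

lemma cfQ_mul_sub_cfP (α : ℝ) (k : ℕ) : cfQ α k * α - cfP α k = (-1) ^ k * cfDist α k := by
  rw [cfDist, ← mul_assoc, ← mul_pow]
  norm_num

lemma cfDist_zero (α : ℝ) : cfDist α 0 = α := by simp [cfDist, cfQ, cfP]

lemma cfDist_add_two (α : ℝ) (k : ℕ) :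
    cfDist α (k + 2) = cfDist α k - cfA α (k + 2) * cfDist α (k + 1) := by
  simp only [cfDist, cfQ, cfP]
  push_cast
  ring

lemma cfDist_succ (hα : Irrational α) (h0 : 0 < α) (h1 : α < 1) :
    ∀ k, cfDist α (k + 1) = cfDist α k * Int.fract (cfX α (k + 1))
  | 0 => by
    have hX : cfX α 1 = α⁻¹ := by simp [cfX, Int.fract_eq_self.2 ⟨h0.le, h1⟩]
    simp only [cfDist, cfQ, cfP, cfA, ← Int.self_sub_floor, hX]
    field_simp
    ring
  | k + 1 => by
    have hX : cfDist α (k + 1) * cfX α (k + 2) = cfDist α k := by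
      rw [cfDist_succ hα h0 h1 k, show cfX α (k + 2) = (Int.fract (cfX α (k + 1)))⁻¹ from rfl,
        mul_assoc, mul_inv_cancel₀ (fract_cfX_pos hα _).ne', mul_one]
    rw [cfDist_add_two, ← Int.self_sub_floor, ← hX, cfA]
    ring

lemma cfDist_pos (hα : Irrational α) (h0 : 0 < α) (h1 : α < 1) : ∀ k, 0 < cfDist α k
  | 0 => by rwa [cfDist_zero]
  | k + 1 => by
    rw [cfDist_succ hα h0 h1]
    exact mul_pos (cfDist_pos hα h0 h1 k) (fract_cfX_pos hα _)

lemma cfDist_succ_lt (hα : Irrational α) (h0 : 0 < α) (h1 : α < 1) (k : ℕ) :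
    cfDist α (k + 1) < cfDist α k := by
  rw [cfDist_succ hα h0 h1]
  exact mul_lt_of_lt_one_right (cfDist_pos hα h0 h1 k) (Int.fract_lt_one _)

lemma two_mul_cfDist_add_two_lt (hα : Irrational α) (h0 : 0 < α) (h1 : α < 1) (k : ℕ) :
    2 * cfDist α (k + 2) < cfDist α k := by
  have ha : (1 : ℝ) ≤ cfA α (k + 2) := by exact_mod_cast cfA_succ_pos hα (k + 1)
  have := le_mul_of_one_le_left (cfDist_pos hα h0 h1 (k + 1)).le ha
  have := cfDist_succ_lt hα h0 h1 (k + 1)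
  linarith [cfDist_add_two α k]

lemma exists_cfDist_lt (hα : Irrational α) (h0 : 0 < α) (h1 : α < 1) {ε : ℝ} (hε : 0 < ε) :
    ∃ k, cfDist α k < ε := by
  have hhalf : ∀ j, cfDist α (2 * j) * 2 ^ j ≤ α := by
    intro j
    induction j with
    | zero => simp [cfDist_zero]
    | succ j ih =>
      have := two_mul_cfDist_add_two_lt hα h0 h1 (2 * j)
      rw [pow_succ, show 2 * (j + 1) = 2 * j + 2 by ring]
      nlinarith [pow_pos (two_pos : (0 : ℝ) < 2) j]
  obtain ⟨j, hj⟩ := pow_unbounded_of_one_lt (α / ε) one_lt_two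
  refine ⟨2 * j, ?_⟩
  rw [div_lt_iff₀ hε] at hj
  nlinarith [hhalf j, pow_pos (two_pos : (0 : ℝ) < 2) j]

lemma exists_cfDist_le_lt (hα : Irrational α) (h0 : 0 < α) (h1 : α < 1) {ε : ℝ}
    (hε0 : 0 < ε) (hεα : ε < α) : ∃ K, cfDist α (K + 1) ≤ ε ∧ ε < cfDist α K := by
  classical
  have hex : ∃ k, cfDist α k ≤ ε := (exists_cfDist_lt hα h0 h1 hε0).imp fun _ => le_of_lt
  obtain ⟨K, hK⟩ : ∃ K, Nat.find hex = K + 1 := by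
    refine Nat.exists_eq_succ_of_ne_zero fun h => ?_
    have := Nat.find_spec hex
    rw [h, cfDist_zero] at this
    linarith
  exact ⟨K, hK ▸ Nat.find_spec hex, lt_of_not_ge (Nat.find_min hex (by omega))⟩

lemma exists_eq_cfQ_combination (α : ℝ) (K : ℕ) (n P : ℤ) :
    ∃ x y : ℤ, n = x * cfQ α (K + 1) + y * cfQ α K ∧
      n * α - P = (-1) ^ K * (y * cfDist α K - x * cfDist α (K + 1)) := by
  have hdet := cfP_mul_cfQ_sub α K
  have hsq : ((-1 : ℤ) ^ K) ^ 2 = 1 := by rw [← pow_mul, mul_comm, pow_mul]; norm_num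
  set x := (-1) ^ K * (P * cfQ α K - n * cfP α K)
  set y := (-1) ^ K * (n * cfP α (K + 1) - P * cfQ α (K + 1))
  have hn : n = x * cfQ α (K + 1) + y * cfQ α K := by
    linear_combination (-(-1) ^ K * n) * hdet - n * hsq
  have hP : P = x * cfP α (K + 1) + y * cfP α K := by
    linear_combination (-(-1) ^ K * P) * hdet - P * hsq
  refine ⟨x, y, hn, ?_⟩
  have hnR : (n : ℝ) = x * cfQ α (K + 1) + y * cfQ α K := by exact_mod_cast hn
  have hPR : (P : ℝ) = x * cfP α (K + 1) + y * cfP α K := by exact_mod_cast hP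
  rw [hnR, hPR]
  linear_combination x * cfQ_mul_sub_cfP α (K + 1) + y * cfQ_mul_sub_cfP α K

/-- The case analysis behind the best-approximation argument: `qᵢ = q_{K+i}`, `ηᵢ = ‖q_{K+i} α‖`,
`η₀ - a η₁ = ‖q_{K+2} α‖`, and `(n, P) = x (q_{K+1}, p_{K+1}) + y (q_K, p_K)` has error
`± (y η₀ - x η₁)`. -/
lemma semiconvergent_coeffs_of_best {q₀ q₁ a x y : ℤ} {η₀ η₁ : ℝ} (hq₀ : 0 < q₀) (hq₁ : 0 ≤ q₁)
    (hη₁ : 0 < η₁) (hη₂ : 0 < η₀ - a * η₁) (hη₂₁ : η₀ - a * η₁ < η₁)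
    (hn : 0 < x * q₁ + y * q₀)
    (hlow : η₁ ≤ |y * η₀ - x * η₁|) (hup : |y * η₀ - x * η₁| < η₀)
    (hbest₁ : y * η₀ - x * η₁ < 0 → q₁ < x * q₁ + y * q₀ → |y * η₀ - x * η₁| < η₁)
    (hbest₂ : 0 < y * η₀ - x * η₁ → a * q₁ + q₀ < x * q₁ + y * q₀ →
      |y * η₀ - x * η₁| < η₀ - a * η₁) :
    (x = 1 ∧ y = 0) ∨ (y = 1 ∧ 0 < x ∧ x ≤ a) := by
  set V := y * η₀ - x * η₁ with hV
  have hx : 0 < x := by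
    by_contra! hx
    have hy : 0 < y := by nlinarith
    have : (1 : ℝ) ≤ y := by exact_mod_cast hy
    have : (x : ℝ) ≤ 0 := by exact_mod_cast hx
    have : η₀ ≤ V := by nlinarith
    exact absurd hup (not_lt.2 (this.trans (le_abs_self V)))
  have hxR : (1 : ℝ) ≤ x := by exact_mod_cast hx
  rcases lt_trichotomy y 0 with hy | rfl | hy
  · have : (y : ℝ) ≤ -1 := by exact_mod_cast (show y ≤ -1 by omega)
    have : V ≤ -η₀ := by nlinarith
    exact absurd hup (not_lt.2 (by rw [abs_of_neg (by linarith)]; linarith))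
  · simp only [Int.cast_zero, zero_mul, zero_sub, add_zero] at hV hn hbest₁
    rcases eq_or_lt_of_le (show 1 ≤ x from hx) with hx1 | hx2
    · exact Or.inl ⟨hx1.symm, rfl⟩
    · have hq₁' : 0 < q₁ := pos_of_mul_pos_right hn hx.le
      have := hbest₁ (by rw [hV]; nlinarith) (by nlinarith)
      rw [hV, abs_neg, abs_of_pos (by positivity)] at this
      nlinarith
  · have hyR : (1 : ℝ) ≤ y := by exact_mod_cast hy
    rcases lt_or_ge V 0 with hVneg | hVnonneg
    · exact absurd (hbest₁ hVneg (by nlinarith)) (not_lt.2 hlow)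
    have hVpos : 0 < V := lt_of_lt_of_le hη₁ (hlow.trans (abs_of_nonneg hVnonneg).le)
    rw [abs_of_pos hVpos] at hlow hup hbest₂
    rcases eq_or_lt_of_le (show 1 ≤ y from hy) with rfl | hy2
    · refine Or.inr ⟨rfl, hx, ?_⟩
      by_contra! hxa
      have : (a : ℝ) + 1 ≤ x := by exact_mod_cast hxa
      simp only [Int.cast_one, one_mul] at hV
      nlinarith
    · -- `(y - 1) η₀ < x η₁` and `a η₁ < η₀` force `a < x`
      have hy2R : (2 : ℝ) ≤ y := by exact_mod_cast hy2
      have hxaR : (a : ℝ) < x := by nlinarith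
      have hxa : a < x := by exact_mod_cast hxaR
      have := hbest₂ hVpos (by nlinarith)
      linarith

end ContinuedFraction

def IsOneSidedBestApprox (α : ℝ) (n : ℕ) : Prop :=
  ∃ P : ℤ, |n * α - P| < α ∧ ∀ (m : ℕ) (Q : ℤ), 0 < m → m < n →
    0 < (n * α - P) * (m * α - Q) → |n * α - P| < |m * α - Q|

lemma abs_lt_cfDist_of_best {α : ℝ} (hα : Irrational α) (h0 : 0 < α) (h1 : α < 1) {n : ℕ}
    {e : ℝ} (hbest : ∀ (m : ℕ) (Q : ℤ), 0 < m → m < n → 0 < e * (m * α - Q) → |e| < |m * α - Q|)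
    (j : ℕ) (hjn : cfQ α j < n) (hprod : 0 < e * ((-1) ^ j * cfDist α j)) :
    |e| < cfDist α j := by
  lift cfQ α j to ℕ using (cfQ_pos hα j).le with m hm
  have hcfQ := cfQ_mul_sub_cfP α j
  rw [← hm, Int.cast_natCast] at hcfQ
  have := hbest m (cfP α j) (by exact_mod_cast hm ▸ cfQ_pos hα j) (by exact_mod_cast hjn)
    (by rwa [hcfQ])
  rwa [hcfQ, abs_mul, abs_pow, abs_neg, abs_one, one_pow, one_mul,
    abs_of_pos (cfDist_pos hα h0 h1 j)] at this

theorem IsOneSidedBestApprox.isSemiconvergentDenom {α : ℝ} (hα : Irrational α) (h0 : 0 < α)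
    (h1 : α < 1) {n : ℕ} (hn : 0 < n) (h : IsOneSidedBestApprox α n) :
    IsSemiconvergentDenom α n := by
  obtain ⟨P, hPα, hbest⟩ := h
  set e := n * α - P with he
  have he0 : 0 < |e| := abs_pos.2 (sub_ne_zero.2 ((hα.natCast_mul hn.ne').ne_int P))
  obtain ⟨K, hK1, hK0⟩ := exists_cfDist_le_lt hα h0 h1 he0 hPα
  obtain ⟨x, y, hnxy, hexy⟩ := exists_eq_cfQ_combination α K n P
  set V := y * cfDist α K - x * cfDist α (K + 1) with hV
  replace hexy : e = (-1) ^ K * V := by rw [he, ← hexy, Int.cast_natCast]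
  have hσ : ((-1 : ℝ) ^ K) ^ 2 = 1 := by rw [← pow_mul, mul_comm, pow_mul]; norm_num
  have habs : |e| = |V| := by rw [hexy, abs_mul, abs_pow, abs_neg, abs_one, one_pow, one_mul]
  have hbest₁ : V < 0 → cfQ α (K + 1) < x * cfQ α (K + 1) + y * cfQ α K →
      |V| < cfDist α (K + 1) := by
    intro hVneg hlt
    rw [← habs]
    refine abs_lt_cfDist_of_best hα h0 h1 hbest (K + 1) (hnxy ▸ hlt) ?_
    have : e * ((-1) ^ (K + 1) * cfDist α (K + 1)) = -V * cfDist α (K + 1) := by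
      rw [hexy, pow_succ]; linear_combination (-V * cfDist α (K + 1)) * hσ
    rw [this]
    exact mul_pos (neg_pos.2 hVneg) (cfDist_pos hα h0 h1 (K + 1))
  have hbest₂ : 0 < V → cfA α (K + 2) * cfQ α (K + 1) + cfQ α K < x * cfQ α (K + 1) + y * cfQ α K →
      |V| < cfDist α K - cfA α (K + 2) * cfDist α (K + 1) := by
    intro hVpos hlt
    rw [← habs, ← cfDist_add_two]
    refine abs_lt_cfDist_of_best hα h0 h1 hbest (K + 2) (hnxy ▸ hlt) ?_
    have : e * ((-1) ^ (K + 2) * cfDist α (K + 2)) = V * cfDist α (K + 2) := by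
      rw [hexy, pow_add]; linear_combination (V * cfDist α (K + 2)) * hσ
    rw [this]
    exact mul_pos hVpos (cfDist_pos hα h0 h1 (K + 2))
  have hcoeffs := semiconvergent_coeffs_of_best (cfQ_pos hα K) (cfQ_pos hα (K + 1)).le
    (cfDist_pos hα h0 h1 (K + 1))
    (by rw [← cfDist_add_two]; exact cfDist_pos hα h0 h1 (K + 2))
    (by rw [← cfDist_add_two]; exact cfDist_succ_lt hα h0 h1 (K + 1))
    (by rw [← hnxy]; exact_mod_cast hn) (habs ▸ hK1) (habs ▸ hK0) hbest₁ hbest₂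
  rcases hcoeffs with ⟨rfl, rfl⟩ | ⟨rfl, hx0, hxa⟩
  · simpa [hnxy] using isSemiconvergentDenom_cfQ hα (K + 1)
  · exact Or.inr (Or.inr ⟨K + 2, x, by omega, hx0, hxa, by simpa using hnxy⟩)

lemma Int.fract_add_eq_or {k : Type*} [Field k] [LinearOrder k] [IsStrictOrderedRing k]
    [FloorRing k] (a b : k) :
    Int.fract (a + b) = Int.fract a + Int.fract b ∨
      Int.fract (a + b) = Int.fract a + Int.fract b - 1 := by
  obtain ⟨z, hz⟩ := Int.fract_add a b
  have h₁ := Int.fract_add_le a b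
  have h₂ := Int.fract_add_fract_le a b
  have hz0 : z ≤ 0 := by exact_mod_cast (show (z : k) ≤ 0 by linarith)
  have hz1 : -1 ≤ z := by exact_mod_cast (show (-1 : k) ≤ z by linarith)
  obtain rfl | rfl : z = 0 ∨ z = -1 := by omega
  · left; push_cast at hz; linarith
  · right; push_cast at hz; linarith

lemma Int.fract_sub_eq_or {k : Type*} [Field k] [LinearOrder k] [IsStrictOrderedRing k]
    [FloorRing k] {a : k} (ha₀ : 0 ≤ a) (ha₁ : a < 1) (y : k) :
    Int.fract (y - a) = Int.fract y - a ∨ Int.fract (y - a) = Int.fract y - a + 1 := by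
  have := Int.fract_add_eq_or (y - a) a
  rw [sub_add_cancel, Int.fract_eq_self.2 ⟨ha₀, ha₁⟩] at this
  rcases this with h | h
  · left; linarith
  · right; linarith

section Sturmian

variable {α : ℝ}

lemma letter_add_ne_iff_of_fract_lt (h0 : 0 < α) (h2 : α < 1 / 2) (y z : ℝ)
    (hz : Int.fract z < α) :
    ¬(1 - α ≤ Int.fract (y + z) ↔ 1 - α ≤ Int.fract y) ↔
      Int.fract y ∈ Set.Ico (1 - α - Int.fract z) (1 - α) ∨
        Int.fract (y - α) ∈ Set.Ico (1 - α - Int.fract z) (1 - α) := by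
  have := Int.fract_nonneg y; have := Int.fract_lt_one y
  have := Int.fract_nonneg z
  have := Int.fract_nonneg (y + z); have := Int.fract_lt_one (y + z)
  have := Int.fract_nonneg (y - α); have := Int.fract_lt_one (y - α)
  rcases Int.fract_add_eq_or y z with h | h <;>
    rcases Int.fract_sub_eq_or h0.le (by linarith) y with h' | h' <;>
    simp only [Set.mem_Ico] <;> grind

lemma letter_add_ne_iff_of_lt_fract (h0 : 0 < α) (h2 : α < 1 / 2) (y z : ℝ)
    (hz : 1 - α < Int.fract z) :
    ¬(1 - α ≤ Int.fract (y + z) ↔ 1 - α ≤ Int.fract y) ↔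
      Int.fract y ∈ Set.Ico (1 - α) (2 - α - Int.fract z) ∨
        Int.fract (y - α) ∈ Set.Ico (1 - α) (2 - α - Int.fract z) := by
  have := Int.fract_nonneg y; have := Int.fract_lt_one y
  have := Int.fract_lt_one z
  have := Int.fract_nonneg (y + z); have := Int.fract_lt_one (y + z)
  have := Int.fract_nonneg (y - α); have := Int.fract_lt_one (y - α)
  rcases Int.fract_add_eq_or y z with h | h <;>
    rcases Int.fract_sub_eq_or h0.le (by linarith) y with h' | h' <;>
    simp only [Set.mem_Ico] <;> grind

lemma sturmian_eq_decide (α θ : ℝ) (j : ℕ) :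
    sturmian α θ j = decide (1 - α ≤ Int.fract (θ + j * α)) := by
  unfold sturmian; split_ifs with h <;> simp [h]

lemma sturmian_add (α θ : ℝ) (k i : ℕ) : sturmian α θ (k + i) = sturmian α (θ + k * α) i := by
  simp only [sturmian_eq_decide]
  push_cast
  ring_nf

lemma exists_sturmian_ne_iff_of_window (θ : ℝ) {m N : ℕ} (hN : 0 < N) (W : Set ℝ)
    (hW : ∀ y, ¬(1 - α ≤ Int.fract (y + m * α) ↔ 1 - α ≤ Int.fract y) ↔
      Int.fract y ∈ W ∨ Int.fract (y - α) ∈ W) :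
    (∃ i < N, sturmian α θ (m + i) ≠ sturmian α θ i) ↔
      ∃ j ≤ N, Int.fract (θ + j * α - α) ∈ W := by
  have hne : ∀ i : ℕ, sturmian α θ (m + i) ≠ sturmian α θ i ↔
      Int.fract (θ + i * α) ∈ W ∨ Int.fract (θ + i * α - α) ∈ W := by
    intro i
    rw [← hW, sturmian_eq_decide, sturmian_eq_decide, Ne, decide_eq_decide]
    push_cast
    ring_nf
  have hsucc (i : ℕ) : θ + ((i + 1 : ℕ) : ℝ) * α - α = θ + i * α := by push_cast; ring
  simp only [hne]
  constructor
  · rintro ⟨i, hi, hmem | hmem⟩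
    · exact ⟨i + 1, hi, by rwa [hsucc]⟩
    · exact ⟨i, hi.le, hmem⟩
  · rintro ⟨_ | i, hj, hmem⟩
    · exact ⟨0, hN, Or.inr hmem⟩
    · exact ⟨i, hj, Or.inl (by rwa [hsucc] at hmem)⟩

lemma fract_mul_lt_of_sturmian_periodic_left (h0 : 0 < α) (h2 : α < 1 / 2) (θ : ℝ) {m n : ℕ}
    (hn : 0 < n) (hnα : Int.fract (n * α) < α)
    (hper : ∀ i < n, sturmian α θ (n + i) = sturmian α θ i)
    (hm : ∃ i < n, sturmian α θ (m + i) ≠ sturmian α θ i) :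
    Int.fract (n * α) < Int.fract (m * α) := by
  have hwindow {k : ℕ} (hk : Int.fract (k * α) < α) :=
    exists_sturmian_ne_iff_of_window θ hn _ fun y => letter_add_ne_iff_of_fract_lt h0 h2 y _ hk
  by_contra! hle
  obtain ⟨j, hj, hmem⟩ := (hwindow (hle.trans_lt hnα)).1 hm
  obtain ⟨i, hi, hne⟩ := (hwindow hnα).2 ⟨j, hj, Set.Ico_subset_Ico_left (by linarith) hmem⟩
  exact hne (hper i hi)

lemma fract_mul_lt_of_sturmian_periodic_right (h0 : 0 < α) (h2 : α < 1 / 2) (θ : ℝ) {m n : ℕ}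
    (hn : 0 < n) (hnα : 1 - α < Int.fract (n * α))
    (hper : ∀ i < n, sturmian α θ (n + i) = sturmian α θ i)
    (hm : ∃ i < n, sturmian α θ (m + i) ≠ sturmian α θ i) :
    Int.fract (m * α) < Int.fract (n * α) := by
  have hwindow {k : ℕ} (hk : 1 - α < Int.fract (k * α)) :=
    exists_sturmian_ne_iff_of_window θ hn _ fun y => letter_add_ne_iff_of_lt_fract h0 h2 y _ hk
  by_contra! hle
  obtain ⟨j, hj, hmem⟩ := (hwindow (hnα.trans_le hle)).1 hm
  obtain ⟨i, hi, hne⟩ := (hwindow hnα).2 ⟨j, hj, Set.Ico_subset_Ico_right (by linarith) hmem⟩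
  exact hne (hper i hi)

lemma fract_mul_lt_or_lt_of_sturmian_periodic (θ : ℝ) {n : ℕ}
    (hper : ∀ i < n, sturmian α θ (n + i) = sturmian α θ i)
    (h1 : ∃ i < n, sturmian α θ (1 + i) ≠ sturmian α θ i) :
    Int.fract (n * α) < α ∨ 1 - α < Int.fract (n * α) := by
  by_contra! hmid
  -- a shift by `{nα} ∈ [α, 1 - α]` turns every letter `1` into a `0`
  have hzero : ∀ i < n, sturmian α θ i = false := by
    intro i hi
    by_contra hi1
    have hy : 1 - α ≤ Int.fract (θ + i * α) := by simpa [sturmian_eq_decide] using hi1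
    have hshift : sturmian α θ (n + i) = false := by
      rw [sturmian_eq_decide, decide_eq_false_iff_not, not_le,
        show θ + ((n + i : ℕ) : ℝ) * α = θ + i * α + n * α by push_cast; ring]
      have := Int.fract_lt_one (θ + i * α)
      have := Int.fract_lt_one (θ + i * α + n * α)
      rcases Int.fract_add_eq_or (θ + i * α) (n * α) with h | h <;> linarith [hmid.1, hmid.2]
    exact hi1 (hper i hi ▸ hshift)
  obtain ⟨i, hi, hne⟩ := h1
  apply hne
  rw [hzero i hi]
  rcases Nat.lt_or_ge (1 + i) n with h | h
  · exact hzero _ h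
  · rw [show 1 + i = n + 0 by omega, hper 0 (by omega), hzero 0 (by omega)]

theorem isOneSidedBestApprox_of_sturmian_periodic (h0 : 0 < α) (h2 : α < 1 / 2) (θ : ℝ) {n : ℕ}
    (hn : 1 < n) (hper : ∀ i < n, sturmian α θ (n + i) = sturmian α θ i)
    (hmismatch : ∀ m, 0 < m → m < n → ∃ i < n, sturmian α θ (m + i) ≠ sturmian α θ i) :
    IsOneSidedBestApprox α n := by
  rcases fract_mul_lt_or_lt_of_sturmian_periodic θ hper (hmismatch 1 one_pos hn) with hnα | hnα
  · refine ⟨⌊n * α⌋, ?_, fun m Q hm hmn hprod => ?_⟩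
    · rwa [Int.self_sub_floor, abs_of_nonneg (Int.fract_nonneg _)]
    rw [Int.self_sub_floor] at hprod ⊢
    have hQ : (Q : ℝ) < m * α := sub_pos.1 (pos_of_mul_pos_right hprod (Int.fract_nonneg _))
    have hfloor : Q ≤ ⌊m * α⌋ := Int.le_floor.2 hQ.le
    rw [abs_of_nonneg (Int.fract_nonneg _), abs_of_pos (sub_pos.2 hQ)]
    calc Int.fract (n * α)
        < Int.fract (m * α) :=
          fract_mul_lt_of_sturmian_periodic_left h0 h2 θ (by omega) hnα hper (hmismatch m hm hmn)
      _ ≤ m * α - Q := by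
          rw [← Int.self_sub_floor]
          exact sub_le_sub_left (by exact_mod_cast hfloor) _
  · refine ⟨⌊n * α⌋ + 1, ?_, fun m Q hm hmn hprod => ?_⟩
    · push_cast
      rw [← sub_sub, Int.self_sub_floor, abs_of_neg (by linarith [Int.fract_lt_one (n * α)])]
      linarith
    push_cast at hprod ⊢
    rw [← sub_sub, Int.self_sub_floor] at hprod ⊢
    have hQ : m * α < Q := sub_neg.1 (neg_of_mul_pos_right hprod
      (by linarith [Int.fract_lt_one (n * α)]))
    have hfloor : ⌊m * α⌋ + 1 ≤ Q := Int.floor_lt.2 hQ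
    rw [abs_of_neg (by linarith [Int.fract_lt_one (n * α)]), abs_of_neg (sub_neg.2 hQ)]
    have := fract_mul_lt_of_sturmian_periodic_right h0 h2 θ (by omega) hnα hper (hmismatch m hm hmn)
    have : (⌊m * α⌋ : ℝ) + 1 ≤ Q := by exact_mod_cast hfloor
    linarith [Int.self_sub_floor (m * α)]

end Sturmian

theorem List.exists_eq_flatten_replicate_of_append_comm {β : Type*} {u v : List β}
    (h : u ++ v = v ++ u) :
    ∃ (z : List β) (a b : ℕ), u = (replicate a z).flatten ∧ v = (replicate b z).flatten := by
  induction hN : u.length + v.length using Nat.strong_induction_on generalizing u v with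
  | _ N ih =>
  wlog huv : u.length ≤ v.length generalizing u v
  · obtain ⟨z, a, b, hu, hv⟩ := this h.symm (by omega) (by omega)
    exact ⟨z, b, a, hv, hu⟩
  obtain ⟨v', rfl⟩ : u <+: v :=
    prefix_of_prefix_length_le (h ▸ prefix_append u v) (prefix_append v u) huv
  rcases eq_or_ne u [] with rfl | hu
  · exact ⟨v', 0, 1, rfl, by simp⟩
  have h' : u ++ v' = v' ++ u := by simpa using h
  obtain ⟨z, a, b, hua, hvb⟩ := ih _ (by simp [← hN, length_pos_iff.2 hu]) h' rfl
  exact ⟨z, a, a + b, hua, by rw [replicate_add, flatten_append, ← hua, ← hvb]⟩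

theorem Primitive.rotate_ne_self {w : List Bool} (hw : Primitive w) {m : ℕ} (hm0 : 0 < m)
    (hm : m < w.length) : w.rotate m ≠ w := by
  intro hrot
  rw [List.rotate_eq_drop_append_take hm.le] at hrot
  obtain ⟨z, a, b, ha, hb⟩ := List.exists_eq_flatten_replicate_of_append_comm
    ((List.take_append_drop m w).trans hrot.symm)
  have hab := hw z (a + b) (by
    rw [List.replicate_add, List.flatten_append, ← ha, ← hb, List.take_append_drop])
  obtain rfl | rfl : a = 0 ∨ b = 0 := by omega
  · have := congrArg List.length ha
    simp only [List.length_take, List.replicate_zero, List.flatten_nil, List.length_nil] at this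
    omega
  · have := congrArg List.length hb
    simp only [List.length_drop, List.replicate_zero, List.flatten_nil, List.length_nil] at this
    omega

theorem List.rotate_eq_self_of_getD_append_self {β : Type*} {w : List β} {m : ℕ} (d : β)
    (hm : m ≤ w.length) (h : ∀ i < w.length, (w ++ w).getD (m + i) d = (w ++ w).getD i d) :
    w.rotate m = w := by
  refine ext_getElem (length_rotate w m) fun i hi hi' => ?_
  have := h i hi'
  rw [getD_eq_getElem _ _ (by simp; omega), getD_eq_getElem _ _ (by simp; omega),
    getElem_append_left hi'] at this
  rw [getElem_rotate, ← this]
  rcases lt_or_ge (m + i) w.length with hlt | hge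
  · have hmod : (i + m) % w.length = m + i := by rw [Nat.mod_eq_of_lt (by omega)]; omega
    simp [hmod, getElem_append_left hlt]
  · rw [getElem_append_right (by omega)]
    congr 1
    rw [Nat.mod_eq_sub_mod (by omega), Nat.mod_eq_of_lt (by omega)]
    omega

/-- if `w² ∈ L(α)` with `w` nonempty and primitive, then
`|w| = q₀`, `|w| = q₁`, or `|w| = q_{k,ℓ} = ℓ q_{k-1} + q_{k-2}` for some `k ≥ 2`
and `0 < ℓ ≤ a_k`. -/
theorem square_length (α : ℝ) (hα : Irrational α) (h0 : 0 < α) (h2 : α < 1 / 2)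
    (w : List Bool) (hw : w ≠ []) (hprim : Primitive w)
    (hsq : inLang α (w ++ w)) :
    (w.length : ℤ) = cfQ α 0 ∨ (w.length : ℤ) = cfQ α 1 ∨
      ∃ (k : ℕ) (ℓ : ℤ), 2 ≤ k ∧ 0 < ℓ ∧ ℓ ≤ cfA α k ∧
        (w.length : ℤ) = ℓ * cfQ α (k - 1) + cfQ α (k - 2) := by
  obtain ⟨x, -, k, hletter⟩ := hsq
  set θ := x + k * α
  set n := w.length
  have hn : 0 < n := List.length_pos_iff.2 hw
  rcases eq_or_lt_of_le (show 1 ≤ n from hn) with hn1 | hn1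
  · exact Or.inl (by rw [← hn1]; rfl)
  replace hletter : ∀ i < 2 * n, (w ++ w).getD i false = sturmian α θ i := fun i hi =>
    (hletter i (by simpa [two_mul] using hi)).trans (sturmian_add α x k i)
  have hper : ∀ i < n, sturmian α θ (n + i) = sturmian α θ i := fun i hi => by
    rw [← hletter _ (by omega), ← hletter _ (by omega), List.getD_append_right _ _ _ _ (by omega),
      List.getD_append _ _ _ _ hi, Nat.add_sub_cancel_left]
  have hmismatch : ∀ m, 0 < m → m < n → ∃ i < n, sturmian α θ (m + i) ≠ sturmian α θ i := by
    intro m hm hmn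
    by_contra! hshift
    refine hprim.rotate_ne_self hm hmn (List.rotate_eq_self_of_getD_append_self false hmn.le ?_)
    intro i hi
    rw [hletter _ (by omega), hletter _ (by omega), hshift i hi]
  exact (isOneSidedBestApprox_of_sturmian_periodic h0 h2 θ hn1 hper hmismatch).isSemiconvergentDenom
    hα h0 (by linarith) hn
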